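/- arXiv:2103.01649 — 3 statements merged into one kernel-verified Lean document; each statement's English description precedes it below -/
import Mathlib

section
/- Let d ≥ 2 and let n ≥ 2 be a fixed integer. Then lim_{s→∞} (ε_s(S^{d−1}, n))^{1/s} = 1/δ_n^ρ(S^{d−1}), where ε_s(S^{d−1}, n) := inf over all n-point configurations Ŵ_n ⊂ S^{d−1} of E_s(Ŵ_n), and δ_n^ρ(S^{d−1}) := sup over all n-point configurations Ŵ_n ⊂ S^{d−1} of ϑ(Ŵ_n). -/
open scoped BigOperators
open Real

/-- A (distinct) `n`-point configuration on the unit hypersphere `S^{d-1} ⊂ ℝ^d`. -/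
def IsSphereConfig (d n : ℕ) (w : Fin n → EuclideanSpace ℝ (Fin d)) : Prop :=
  (∀ i, ‖w i‖ = 1) ∧ Function.Injective w

/-- Riesz `s`-energy `E_s(Ŵ_n) = ∑_{i ≠ j} ‖ŵ_i - ŵ_j‖^{-s}`. -/
noncomputable def rieszEnergy (d n : ℕ) (s : ℝ) (w : Fin n → EuclideanSpace ℝ (Fin d)) : ℝ :=
  ∑ i, ∑ j ∈ Finset.univ.erase i, ‖w i - w j‖ ^ (-s)

/-- Separation distance `ϑ(Ŵ_n) = min_{i ≠ j} ‖ŵ_i - ŵ_j‖`. -/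
noncomputable def separationDist (d n : ℕ) (w : Fin n → EuclideanSpace ℝ (Fin d)) : ℝ :=
  ⨅ p : {p : Fin n × Fin n // p.1 ≠ p.2}, ‖w p.1.1 - w p.1.2‖

/-- `ε_s(S^{d-1}, n)`: minimal Riesz `s`-energy over all `n`-point configurations. -/
noncomputable def minEnergy (d n : ℕ) (s : ℝ) : ℝ :=
  ⨅ w : {w : Fin n → EuclideanSpace ℝ (Fin d) // IsSphereConfig d n w},
    rieszEnergy d n s w.1

/-- `δ_n^ρ(S^{d-1})`: maximal separation distance over all `n`-point configurations. -/
noncomputable def maxSeparation (d n : ℕ) : ℝ :=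
  ⨆ w : {w : Fin n → EuclideanSpace ℝ (Fin d) // IsSphereConfig d n w},
    separationDist d n w.1

lemma config_exists (d n : ℕ) (hd : 2 ≤ d) (hn : 2 ≤ n) :
    ∃ w : Fin n → EuclideanSpace ℝ (Fin d), IsSphereConfig d n w := by
  have h0 : 0 < d := by omega
  have h1 : 1 < d := by omega
  have hnpos : (0:ℝ) < n := by positivity
  have hne : (⟨1, h1⟩ : Fin d) ≠ ⟨0, h0⟩ := by simp [Fin.ext_iff]
  set θ : Fin n → ℝ := fun i => (i : ℝ) * (π / n) with hθ
  refine ⟨fun i => EuclideanSpace.single ⟨0, h0⟩ (Real.cos (θ i)) +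
      EuclideanSpace.single ⟨1, h1⟩ (Real.sin (θ i)), ?_, ?_⟩
  · intro i
    set x := EuclideanSpace.single (⟨0, h0⟩ : Fin d) (Real.cos (θ i)) +
      EuclideanSpace.single (⟨1, h1⟩ : Fin d) (Real.sin (θ i)) with hx
    have hinner : (inner ℝ x x : ℝ) = 1 := by
      rw [hx, inner_add_left, EuclideanSpace.inner_single_left,
        EuclideanSpace.inner_single_left, PiLp.add_apply, PiLp.add_apply,
        EuclideanSpace.single_apply, EuclideanSpace.single_apply,
        EuclideanSpace.single_apply, EuclideanSpace.single_apply]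
      simp [hne, hne.symm]
      nlinarith [Real.sin_sq_add_cos_sq (θ i)]
    have h2 : ‖x‖ ^ 2 = 1 := by rw [← real_inner_self_eq_norm_sq]; exact hinner
    nlinarith [norm_nonneg x]
  · intro i j hij
    have hmem : ∀ k : Fin n, θ k ∈ Set.Icc 0 π := by
      intro k
      refine ⟨by positivity, ?_⟩
      have : (k : ℝ) ≤ n := by exact_mod_cast le_of_lt k.2
      calc (k:ℝ) * (π/n) ≤ n * (π/n) := by
            apply mul_le_mul_of_nonneg_right this; positivity
        _ = π := by field_simp
    have hcos : Real.cos (θ i) = Real.cos (θ j) := by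
      have := congrArg (fun v : EuclideanSpace ℝ (Fin d) => v (⟨0, h0⟩ : Fin d)) hij
      simpa [PiLp.add_apply, EuclideanSpace.single_apply, hne, hne.symm] using this
    have hθeq := Real.injOn_cos (hmem i) (hmem j) hcos
    have hπ : (0:ℝ) < π / n := by positivity
    have hcast : (i:ℝ) = (j:ℝ) := mul_right_cancel₀ hπ.ne' hθeq
    exact Fin.ext (by exact_mod_cast hcast)

section Aux
variable {d n : ℕ}

lemma pairNonempty (hn : 2 ≤ n) : Nonempty {p : Fin n × Fin n // p.1 ≠ p.2} :=
  ⟨⟨(⟨0, by omega⟩, ⟨1, by omega⟩), by simp [Fin.ext_iff]⟩⟩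

lemma sep_bddBelow (w : Fin n → EuclideanSpace ℝ (Fin d)) :
    BddBelow (Set.range fun p : {p : Fin n × Fin n // p.1 ≠ p.2} => ‖w p.1.1 - w p.1.2‖) :=
  ⟨0, by rintro x ⟨p, rfl⟩; exact norm_nonneg _⟩

lemma sep_le (w : Fin n → EuclideanSpace ℝ (Fin d)) {i j : Fin n} (h : i ≠ j) :
    separationDist d n w ≤ ‖w i - w j‖ :=
  ciInf_le (sep_bddBelow w) ⟨(i, j), h⟩

lemma sep_attained (hn : 2 ≤ n) (w : Fin n → EuclideanSpace ℝ (Fin d)) :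
    ∃ p : {p : Fin n × Fin n // p.1 ≠ p.2},
      separationDist d n w = ‖w p.1.1 - w p.1.2‖ := by
  haveI := pairNonempty hn
  obtain ⟨p₀, hp₀⟩ := Finite.exists_min
    (fun p : {p : Fin n × Fin n // p.1 ≠ p.2} => ‖w p.1.1 - w p.1.2‖)
  exact ⟨p₀, le_antisymm (sep_le w p₀.2) (le_ciInf hp₀)⟩

lemma sep_pos (hn : 2 ≤ n) (w : Fin n → EuclideanSpace ℝ (Fin d))
    (hw : Function.Injective w) : 0 < separationDist d n w := by
  obtain ⟨p, hp⟩ := sep_attained hn w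
  rw [hp, norm_sub_pos_iff]
  exact fun h => p.2 (hw h)

lemma sep_le_two (hn : 2 ≤ n) (w : Fin n → EuclideanSpace ℝ (Fin d))
    (hw : ∀ i, ‖w i‖ = 1) : separationDist d n w ≤ 2 := by
  have h01 : (⟨0, by omega⟩ : Fin n) ≠ ⟨1, by omega⟩ := by simp [Fin.ext_iff]
  calc separationDist d n w ≤ ‖w ⟨0, by omega⟩ - w ⟨1, by omega⟩‖ := sep_le w h01
    _ ≤ ‖w ⟨0, by omega⟩‖ + ‖w ⟨1, by omega⟩‖ := norm_sub_le _ _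
    _ = 2 := by rw [hw, hw]; norm_num

lemma maxSep_bddAbove (hn : 2 ≤ n) :
    BddAbove (Set.range fun w : {w : Fin n → EuclideanSpace ℝ (Fin d) // IsSphereConfig d n w}
      => separationDist d n w.1) :=
  ⟨2, by rintro x ⟨w, rfl⟩; exact sep_le_two hn w.1 w.2.1⟩

lemma maxSep_pos (hd : 2 ≤ d) (hn : 2 ≤ n) : 0 < maxSeparation d n := by
  obtain ⟨w, hw⟩ := config_exists d n hd hn
  calc (0:ℝ) < separationDist d n w := sep_pos hn w hw.2
    _ ≤ maxSeparation d n := le_ciSup (maxSep_bddAbove hn) ⟨w, hw⟩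

lemma energy_nonneg (s : ℝ) (w : Fin n → EuclideanSpace ℝ (Fin d)) :
    0 ≤ rieszEnergy d n s w :=
  Finset.sum_nonneg fun i _ => Finset.sum_nonneg fun j _ =>
    Real.rpow_nonneg (norm_nonneg _) _

lemma energy_lower (hd : 2 ≤ d) (hn : 2 ≤ n) {s : ℝ} (hs : 0 ≤ s)
    (w : Fin n → EuclideanSpace ℝ (Fin d)) (hw : IsSphereConfig d n w) :
    (maxSeparation d n) ^ (-s) ≤ rieszEnergy d n s w := by
  obtain ⟨p, hp⟩ := sep_attained hn w
  have hpos : 0 < separationDist d n w := sep_pos hn w hw.2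
  have hle : separationDist d n w ≤ maxSeparation d n :=
    le_ciSup (maxSep_bddAbove hn) ⟨w, hw⟩
  have h1 : (maxSeparation d n) ^ (-s) ≤ ‖w p.1.1 - w p.1.2‖ ^ (-s) := by
    rw [← hp]
    exact Real.rpow_le_rpow_of_nonpos hpos hle (neg_nonpos.2 hs)
  have hmem : p.1.2 ∈ Finset.univ.erase p.1.1 :=
    Finset.mem_erase.2 ⟨p.2.symm, Finset.mem_univ _⟩
  have hinner : ‖w p.1.1 - w p.1.2‖ ^ (-s)
      ≤ ∑ j ∈ Finset.univ.erase p.1.1, ‖w p.1.1 - w j‖ ^ (-s) :=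
    Finset.single_le_sum (f := fun j => ‖w p.1.1 - w j‖ ^ (-s))
      (fun j _ => Real.rpow_nonneg (norm_nonneg _) _) hmem
  have houter : (∑ j ∈ Finset.univ.erase p.1.1, ‖w p.1.1 - w j‖ ^ (-s))
      ≤ ∑ i, ∑ j ∈ Finset.univ.erase i, ‖w i - w j‖ ^ (-s) :=
    Finset.single_le_sum
      (f := fun i => ∑ j ∈ Finset.univ.erase i, ‖w i - w j‖ ^ (-s))
      (fun i _ => Finset.sum_nonneg fun j _ => Real.rpow_nonneg (norm_nonneg _) _)
      (Finset.mem_univ _)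
  rw [rieszEnergy]
  exact h1.trans (hinner.trans houter)

lemma minE_bddBelow (d n : ℕ) (s : ℝ) :
    BddBelow (Set.range fun w : {w : Fin n → EuclideanSpace ℝ (Fin d) // IsSphereConfig d n w}
      => rieszEnergy d n s w.1) :=
  ⟨0, by rintro x ⟨w, rfl⟩; exact energy_nonneg s w.1⟩

lemma minE_lower (hd : 2 ≤ d) (hn : 2 ≤ n) {s : ℝ} (hs : 0 ≤ s) :
    (maxSeparation d n) ^ (-s) ≤ minEnergy d n s := by
  haveI : Nonempty {w : Fin n → EuclideanSpace ℝ (Fin d) // IsSphereConfig d n w} := by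
    obtain ⟨w, hw⟩ := config_exists d n hd hn; exact ⟨⟨w, hw⟩⟩
  exact le_ciInf fun w => energy_lower hd hn hs w.1 w.2

lemma minE_upper (hd : 2 ≤ d) (hn : 2 ≤ n) {s c : ℝ} (hs : 0 ≤ s) (hc : 0 < c)
    (hcδ : c < maxSeparation d n) :
    minEnergy d n s ≤ (n:ℝ)^2 * c ^ (-s) := by
  have hne : Nonempty {w : Fin n → EuclideanSpace ℝ (Fin d) // IsSphereConfig d n w} := by
    obtain ⟨w, hw⟩ := config_exists d n hd hn; exact ⟨⟨w, hw⟩⟩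
  obtain ⟨w, hw⟩ := exists_lt_of_lt_ciSup hcδ
  refine (ciInf_le (minE_bddBelow d n s) w).trans ?_
  have hterm : ∀ i j : Fin n, i ≠ j → ‖w.1 i - w.1 j‖ ^ (-s) ≤ c ^ (-s) := fun i j hij =>
    Real.rpow_le_rpow_of_nonpos hc (hw.le.trans (sep_le w.1 hij)) (neg_nonpos.2 hs)
  have hstep : rieszEnergy d n s w.1
      ≤ ∑ _i : Fin n, ∑ _j ∈ Finset.univ.erase _i, c ^ (-s) := by
    rw [rieszEnergy]
    refine Finset.sum_le_sum fun i _ => Finset.sum_le_sum fun j hj => ?_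
    exact hterm i j (Finset.mem_erase.1 hj).1.symm
  refine hstep.trans ?_
  have hcs : (0:ℝ) ≤ c ^ (-s) := Real.rpow_nonneg hc.le _
  calc ∑ i : Fin n, ∑ _j ∈ Finset.univ.erase i, c ^ (-s)
      = ∑ i : Fin n, ((Finset.univ.erase i).card : ℝ) * c ^ (-s) := by
        simp [Finset.sum_const, nsmul_eq_mul]
    _ ≤ ∑ _i : Fin n, (n:ℝ) * c ^ (-s) := by
        refine Finset.sum_le_sum fun i _ => ?_
        have hcard : ((Finset.univ.erase i).card : ℝ) ≤ n := by
          have h := (Finset.erase_subset i (Finset.univ : Finset (Fin n)))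
          have := Finset.card_le_card h
          simp only [Finset.card_univ, Fintype.card_fin] at this
          exact_mod_cast this
        exact mul_le_mul_of_nonneg_right hcard hcs
    _ = (n:ℝ)^2 * c ^ (-s) := by
        rw [Finset.sum_const, nsmul_eq_mul, Finset.card_univ, Fintype.card_fin]
        ring

end Aux

theorem stmt_1 (d n : ℕ) (hd : 2 ≤ d) (hn : 2 ≤ n) :
    Filter.Tendsto (fun s : ℝ => (minEnergy d n s) ^ (1 / s)) Filter.atTop
      (nhds (1 / maxSeparation d n)) := by
  set δ := maxSeparation d n with hδdef
  have hδ : 0 < δ := maxSep_pos hd hn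
  rw [Metric.tendsto_nhds]
  intro ε hε
  set c : ℝ := δ / (1 + δ * ε / 2) with hcdef
  have hden : (0:ℝ) < 1 + δ * ε / 2 := by positivity
  have hc : 0 < c := by positivity
  have hcδ : c < δ := by
    rw [hcdef, div_lt_iff₀ hden]
    nlinarith [mul_pos (mul_pos hδ hδ) hε]
  have hcinv : 1 / c = 1 / δ + ε / 2 := by
    rw [hcdef]
    field_simp
  have hA : (0:ℝ) < (n:ℝ)^2 := by positivity
  have hT : Filter.Tendsto (fun s : ℝ => ((n:ℝ)^2) ^ (1/s) * (1/c)) Filter.atTop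
      (nhds (1/c)) := by
    have h2 : Filter.Tendsto (fun s : ℝ => Real.log ((n:ℝ)^2) * (1/s))
        Filter.atTop (nhds 0) := by
      have h := tendsto_inv_atTop_zero.const_mul (Real.log ((n:ℝ)^2))
      rw [mul_zero] at h
      simpa only [one_div] using h
    have h1 : Filter.Tendsto (fun s : ℝ => ((n:ℝ)^2) ^ (1/s)) Filter.atTop (nhds 1) := by
      have := (Real.continuous_exp.tendsto 0).comp h2
      simp only [Function.comp_def, Real.exp_zero] at this
      convert this using 2 with s
      rw [Real.rpow_def_of_pos hA]
    simpa using h1.mul_const (1/c)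
  have hup : ∀ᶠ s : ℝ in Filter.atTop, ((n:ℝ)^2) ^ (1/s) * (1/c) < 1/δ + ε :=
    hT.eventually_lt_const (by rw [hcinv]; linarith)
  filter_upwards [Filter.eventually_ge_atTop (1:ℝ), hup] with s hs1 hsup
  have hs0 : (0:ℝ) < s := lt_of_lt_of_le one_pos hs1
  have hexp : (-s) * (1/s) = -1 := by field_simp
  have hlo := minE_lower (d := d) (n := n) hd hn hs0.le
  have hEnn : (0:ℝ) ≤ minEnergy d n s :=
    (Real.rpow_pos_of_pos hδ (-s)).le.trans hlo
  -- lower bound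
  have hlow : 1/δ ≤ (minEnergy d n s) ^ (1/s) := by
    have h := Real.rpow_le_rpow (Real.rpow_nonneg hδ.le _) hlo (by positivity : (0:ℝ) ≤ 1/s)
    rwa [← Real.rpow_mul hδ.le, hexp, Real.rpow_neg_one, ← one_div] at h
  -- upper bound
  have hub := minE_upper (d := d) (n := n) hd hn hs0.le hc hcδ
  have hupp : (minEnergy d n s) ^ (1/s) ≤ ((n:ℝ)^2) ^ (1/s) * (1/c) := by
    have h := Real.rpow_le_rpow hEnn hub (by positivity : (0:ℝ) ≤ 1/s)
    rwa [Real.mul_rpow hA.le (Real.rpow_nonneg hc.le _), ← Real.rpow_mul hc.le,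
      hexp, Real.rpow_neg_one, ← one_div] at h
  have hfin : (minEnergy d n s) ^ (1/s) < 1/δ + ε := lt_of_le_of_lt hupp hsup
  rw [Real.dist_eq, abs_lt]
  constructor <;> [linarith; linarith]
end

section
/- Let f : ℝ → ℝ be convex on the interval [0,4] and decreasing (antitone) on [0,4]. Let n ≥ 2 and let ŵ₁,…,ŵ_n be unit vectors on the unit sphere S^d ⊂ ℝ^{d+1} (d ≥ 1). Then Σ_{i=1}^n Σ_{j≠i} f(‖ŵ_i − ŵ_j‖²) ≥ n(n−1) · f(2n/(n−1)). -/
open scoped BigOperators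

theorem stmt_10 (f : ℝ → ℝ) (hconv : ConvexOn ℝ (Set.Icc (0 : ℝ) 4) f)
    (hdec : AntitoneOn f (Set.Icc (0 : ℝ) 4))
    (d n : ℕ) (hd : 1 ≤ d) (hn : 2 ≤ n)
    (w : Fin n → EuclideanSpace ℝ (Fin (d + 1))) (hw : ∀ i, ‖w i‖ = 1) :
    (n : ℝ) * ((n : ℝ) - 1) * f (2 * (n : ℝ) / ((n : ℝ) - 1)) ≤
      ∑ i, ∑ j ∈ Finset.univ.erase i, f (‖w i - w j‖ ^ 2) := by
  have hn2 : (2:ℝ) ≤ (n:ℝ) := by exact_mod_cast hn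
  set N : ℝ := (n:ℝ) * ((n:ℝ) - 1) with hNdef
  have hNpos : 0 < N := by nlinarith
  have hx04 : ∀ i j : Fin n, ‖w i - w j‖ ^ 2 ∈ Set.Icc (0:ℝ) 4 := by
    intro i j
    constructor
    · positivity
    · have h := norm_sub_le (w i) (w j)
      rw [hw i, hw j] at h
      nlinarith [norm_nonneg (w i - w j)]
  set S : ℝ := ∑ i, ∑ j ∈ Finset.univ.erase i, ‖w i - w j‖ ^ 2 with hSdef
  have hSnonneg : 0 ≤ S :=
    Finset.sum_nonneg fun i _ => Finset.sum_nonneg fun j _ => sq_nonneg _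
  -- S ≤ 2 n^2
  have hSle : S ≤ 2 * (n:ℝ) ^ 2 := by
    have hfull : S = ∑ i, ∑ j, ‖w i - w j‖ ^ 2 :=
      Finset.sum_congr rfl fun i _ => Finset.sum_erase _ (by simp)
    have hexp : ∀ i j : Fin n, ‖w i - w j‖ ^ 2 = 2 - 2 * inner ℝ (w i) (w j) := by
      intro i j
      have := norm_sub_sq_real (w i) (w j)
      rw [hw i, hw j] at this
      linarith
    have hinner : (0:ℝ) ≤ ∑ i, ∑ j, (inner ℝ (w i) (w j) : ℝ) := by
      have h1 : ∑ i, ∑ j, (inner ℝ (w i) (w j) : ℝ) = ‖∑ i, w i‖ ^ 2 := by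
        rw [← real_inner_self_eq_norm_sq, sum_inner]
        exact Finset.sum_congr rfl fun i _ => by rw [inner_sum]
      rw [h1]; positivity
    have h2 : ∑ i, ∑ j, ‖w i - w j‖ ^ 2
        = 2 * (n:ℝ)^2 - 2 * ∑ i, ∑ j, (inner ℝ (w i) (w j) : ℝ) := by
      simp only [hexp, Finset.sum_sub_distrib, Finset.sum_const, Finset.card_univ,
        Fintype.card_fin, nsmul_eq_mul, ← Finset.mul_sum]
      ring
    rw [hfull]; linarith
  -- Jensen over the sigma finset
  set t : Finset ((_ : Fin n) × Fin n) :=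
    Finset.univ.sigma fun i => Finset.univ.erase i with htdef
  have hcard : (t.card : ℝ) = N := by
    rw [htdef, Finset.card_sigma]
    simp only [Finset.card_erase_of_mem (Finset.mem_univ _), Finset.card_univ,
      Fintype.card_fin, Finset.sum_const, smul_eq_mul]
    push_cast [Nat.cast_sub (by omega : 1 ≤ n)]
    ring
  have hjensen : f (S / N) ≤ (1 / N) * ∑ i, ∑ j ∈ Finset.univ.erase i, f (‖w i - w j‖ ^ 2) := by
    have := hconv.map_sum_le (t := t) (w := fun _ => 1 / N)
      (p := fun q => ‖w q.1 - w q.2‖ ^ 2)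
      (fun _ _ => by positivity)
      (by rw [Finset.sum_const, nsmul_eq_mul, hcard]; field_simp)
      (fun q _ => hx04 q.1 q.2)
    have hsum1 : ∑ q ∈ t, (1 / N) • ‖w q.1 - w q.2‖ ^ 2 = S / N := by
      rw [← Finset.smul_sum, htdef, Finset.sum_sigma]
      simp [smul_eq_mul, div_eq_mul_inv, mul_comm, hSdef]
    have hsum2 : ∑ q ∈ t, (1 / N) * f (‖w q.1 - w q.2‖ ^ 2)
        = (1 / N) * ∑ i, ∑ j ∈ Finset.univ.erase i, f (‖w i - w j‖ ^ 2) := by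
      rw [← Finset.mul_sum, htdef, Finset.sum_sigma]
    simp only [smul_eq_mul] at this hsum1
    rw [hsum1, hsum2] at this
    exact this
  -- bounds on S/N
  have hSN_le : S / N ≤ 2 * (n:ℝ) / ((n:ℝ) - 1) := by
    rw [div_le_div_iff₀ hNpos (by linarith)]
    nlinarith
  have hc4 : 2 * (n:ℝ) / ((n:ℝ) - 1) ≤ 4 := by
    rw [div_le_iff₀ (by linarith)]
    nlinarith
  have hcmem : 2 * (n:ℝ) / ((n:ℝ) - 1) ∈ Set.Icc (0:ℝ) 4 :=
    ⟨div_nonneg (by linarith) (by linarith), hc4⟩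
  have hSNmem : S / N ∈ Set.Icc (0:ℝ) 4 :=
    ⟨by positivity, le_trans hSN_le hc4⟩
  have hmono : f (2 * (n:ℝ) / ((n:ℝ) - 1)) ≤ f (S / N) := hdec hSNmem hcmem hSN_le
  have hfin : N * f (S / N) ≤ ∑ i, ∑ j ∈ Finset.univ.erase i, f (‖w i - w j‖ ^ 2) := by
    have h := mul_le_mul_of_nonneg_left hjensen (le_of_lt hNpos)
    rwa [← mul_assoc, mul_one_div, div_self (ne_of_gt hNpos), one_mul] at h
  calc N * f (2 * (n:ℝ) / ((n:ℝ) - 1)) ≤ N * f (S / N) :=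
        mul_le_mul_of_nonneg_left hmono (le_of_lt hNpos)
    _ ≤ _ := hfin
end

section
/- Let d ≥ 2 and 0 < s < d−1, and let σ_{d−1} denote the uniform (rotation-invariant) probability measure on S^{d−1}. Define I_s[σ_{d−1}] = ∫∫_{S^{d−1}×S^{d−1}} ‖x − y‖^{−s} dσ_{d−1}(x) dσ_{d−1}(y), which is finite for s < d−1. If Ŵ*_n = {ŵ*₁,…,ŵ*_n} ⊂ S^{d−1} (n ≥ 2) attains the minimal Riesz s-energy ε_s(S^{d−1}, n), then for every i ∈ {1,…,n}: (1/(n−1)) Σ_{j ≠ i} ‖ŵ*_i − ŵ*_j‖^{−s} ≤ I_s[σ_{d−1}]. -/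
open scoped BigOperators
open MeasureTheory

namespace Stmt14Aux

open Metric Finset
open scoped ENNReal

variable {d : ℕ}

local notation "E" => EuclideanSpace ℝ (Fin d)

lemma exists_isometry (p q : E) (h : ‖p‖ = ‖q‖) :
    ∃ R : E ≃ₗᵢ[ℝ] E, R p = q :=
  ⟨Submodule.reflection (ℝ ∙ (p - q))ᗮ, Submodule.reflection_sub h⟩

lemma ball_eq_of_inv (σ : Measure E)
    (hσinv : ∀ R : E ≃ₗᵢ[ℝ] E, σ.map R = σ)
    {p q : E} (h : ‖p‖ = ‖q‖) (ρ : ℝ) :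
    σ (ball q ρ) = σ (ball p ρ) := by
  obtain ⟨R, hR⟩ := exists_isometry p q h
  conv_lhs => rw [← hσinv R, ← hR]
  rw [Measure.map_apply R.continuous.measurable measurableSet_ball,
    R.isometry.preimage_ball]

lemma nontriv (hd : 2 ≤ d) : Nontrivial E := by
  have h : (0:E) ≠ EuclideanSpace.single (⟨0, by omega⟩ : Fin d) (1:ℝ) := by
    intro h
    have := congrArg (fun v : E => v ⟨0, by omega⟩) h.symm
    simp [EuclideanSpace.single] at this
  exact ⟨_, _, h⟩

/-- any `2ρ`-separated subset of the sphere has at most `(2/ρ)^d` points -/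
lemma card_bound (hd : 2 ≤ d) {ρ : ℝ} (hρ : 0 < ρ) (hρ1 : ρ ≤ 1)
    (S : Finset E) (hS : ∀ p ∈ S, ‖p‖ = 1)
    (hsep : ∀ p ∈ S, ∀ q ∈ S, p ≠ q → 2 * ρ ≤ dist p q) :
    (S.card : ℝ) * ρ ^ d ≤ 2 ^ d := by
  haveI := nontriv hd
  set v : ℝ≥0∞ := volume (ball (0:E) 1) with hv
  have hv0 : v ≠ 0 := (measure_ball_pos _ _ one_pos).ne'
  have hvt : v ≠ ⊤ := measure_ball_lt_top.ne
  have hdisj : (S : Set E).PairwiseDisjoint (fun p => ball p ρ) := by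
    intro p hp q hq hpq
    exact ball_disjoint_ball (by have := hsep p hp q hq hpq; linarith)
  have hsub : ∀ p ∈ S, ball p ρ ⊆ ball (0:E) 2 := by
    intro p hp x hx
    have : dist x (0:E) ≤ dist x p + dist p 0 := dist_triangle _ _ _
    have hp1 : dist p (0:E) = 1 := by simpa [dist_eq_norm] using hS p hp
    simp only [mem_ball] at hx ⊢
    nlinarith [hx, this, hp1]
  have hball : ∀ p : E, volume (ball p ρ) = ENNReal.ofReal (ρ ^ d) * v := by
    intro p
    rw [hv, Measure.addHaar_ball volume p hρ.le, finrank_euclideanSpace_fin]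
  have hsum : (S.card : ℝ≥0∞) * (ENNReal.ofReal (ρ ^ d) * v)
      ≤ ENNReal.ofReal (2 ^ d) * v := by
    calc (S.card : ℝ≥0∞) * (ENNReal.ofReal (ρ ^ d) * v)
        = ∑ p ∈ S, volume (ball p ρ) := by
          rw [Finset.sum_congr rfl fun p _ => hball p, Finset.sum_const, nsmul_eq_mul]
      _ = volume (⋃ p ∈ S, ball p ρ) :=
          (measure_biUnion_finset hdisj fun p _ => measurableSet_ball).symm
      _ ≤ volume (ball (0:E) 2) := measure_mono (Set.iUnion₂_subset hsub)
      _ = ENNReal.ofReal (2 ^ d) * v := by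
          rw [hv, Measure.addHaar_ball volume _ (by norm_num : (0:ℝ) ≤ 2),
            finrank_euclideanSpace_fin]
  rw [← mul_assoc] at hsum
  have hsum2 := (ENNReal.mul_le_mul_iff_left hv0 hvt).mp hsum
  have : ENNReal.ofReal ((S.card : ℝ) * ρ ^ d) ≤ ENNReal.ofReal (2 ^ d) := by
    rwa [ENNReal.ofReal_mul (by positivity), ENNReal.ofReal_natCast]
  have := (ENNReal.ofReal_le_ofReal_iff (by positivity)).mp this
  linarith


/-- there is a `2ρ`-separated subset of the sphere with at least `ρ^{1-d}/3^d` points -/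
lemma exists_packing (hd : 2 ≤ d) {ρ : ℝ} (hρ : 0 < ρ) (hρ1 : ρ ≤ 1) :
    ∃ S : Finset E, (∀ p ∈ S, ‖p‖ = 1) ∧
      (∀ p ∈ S, ∀ q ∈ S, p ≠ q → 2 * ρ ≤ dist p q) ∧
      ρ ≤ (S.card : ℝ) * (3 ^ d * ρ ^ d) := by
  haveI : Nontrivial E := nontriv hd
  classical
  set e : E := EuclideanSpace.single (⟨0, by omega⟩ : Fin d) (1:ℝ) with he
  have hene : ‖e‖ = 1 := by simp [he]
  set B : ℕ := ⌈(2 / ρ) ^ d⌉₊ with hB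
  set Q : ℕ → Prop := fun m => ∃ S : Finset E, (∀ p ∈ S, ‖p‖ = 1) ∧
      (∀ p ∈ S, ∀ q ∈ S, p ≠ q → 2 * ρ ≤ dist p q) ∧ S.card = m with hQ
  have hQbound : ∀ m, Q m → m ≤ B := by
    rintro m ⟨S, h1, h2, h3⟩
    have h4 := card_bound hd hρ hρ1 S h1 h2
    have hcard : (m : ℝ) ≤ (2 / ρ) ^ d := by
      rw [div_pow, le_div_iff₀ (by positivity), ← h3]; exact h4
    exact_mod_cast hcard.trans (Nat.le_ceil _)
  have hQ1 : Q 1 := ⟨{e}, by simpa using hene, by simp, by simp⟩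
  set m : ℕ := Nat.findGreatest Q B with hm
  obtain ⟨S, hS1, hS2, hS3⟩ : Q m :=
    Nat.findGreatest_spec (m := 1) (hQbound 1 hQ1) hQ1
  refine ⟨S, hS1, hS2, ?_⟩
  -- coverage of the sphere by balls of radius 2ρ around S
  have hcov : ∀ x : E, ‖x‖ = 1 → ∃ p ∈ S, dist x p < 2 * ρ := by
    intro x hx
    by_contra hno
    push_neg at hno
    have hxS : x ∉ S := fun hxS => by
      have := hno x hxS; simp at this; linarith
    have hQm1 : Q (m + 1) := by
      refine ⟨insert x S, ?_, ?_, by rw [Finset.card_insert_of_notMem hxS, hS3]⟩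
      · intro p hp
        rcases Finset.mem_insert.mp hp with h | h
        · rw [h]; exact hx
        · exact hS1 p h
      · intro p hp q hq hpq
        rcases Finset.mem_insert.mp hp with h | h <;>
          rcases Finset.mem_insert.mp hq with h' | h'
        · exact absurd (h.trans h'.symm) hpq
        · rw [h]; exact hno q h'
        · rw [h']; rw [dist_comm]; exact hno p h
        · exact hS2 p h q h' hpq
    have := Nat.le_findGreatest (hQbound (m + 1) hQm1) hQm1
    omega
  -- volume argument: the annulus is covered by balls of radius 3ρ
  have hann : (ball (0:E) (1 + ρ) \ closedBall (0:E) 1) ⊆ ⋃ p ∈ S, ball p (3 * ρ) := by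
    intro x hx
    obtain ⟨hx1, hx2⟩ := hx
    simp only [mem_ball, mem_closedBall, dist_zero_right, not_le] at hx1 hx2
    have hx0 : x ≠ 0 := by intro h; rw [h, norm_zero] at hx2; linarith
    set u : E := ‖x‖⁻¹ • x with hu
    have hun : ‖u‖ = 1 := by
      rw [hu, norm_smul, norm_inv, norm_norm, inv_mul_cancel₀ (norm_ne_zero_iff.mpr hx0)]
    obtain ⟨p, hpS, hpd⟩ := hcov u hun
    refine Set.mem_biUnion hpS ?_
    have hxpos : (0:ℝ) < ‖x‖ := by linarith
    have hdxu : dist x u = ‖x‖ - 1 := by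
      rw [hu, dist_eq_norm]
      nth_rewrite 1 [← one_smul ℝ x]
      rw [← sub_smul, norm_smul, Real.norm_eq_abs,
        abs_of_nonneg (by rw [sub_nonneg]; exact inv_le_one_of_one_le₀ hx2.le)]
      field_simp
    have : dist x p ≤ dist x u + dist u p := dist_triangle _ _ _
    simp only [mem_ball]
    calc dist x p ≤ dist x u + dist u p := this
      _ < (‖x‖ - 1) + 2 * ρ := by rw [hdxu]; linarith
      _ ≤ 3 * ρ := by nlinarith [hx1]
  -- compare volumes
  set v : ℝ≥0∞ := volume (ball (0:E) 1) with hv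
  have hv0 : v ≠ 0 := (measure_ball_pos _ _ one_pos).ne'
  have hvt : v ≠ ⊤ := measure_ball_lt_top.ne
  have hvol1 : ENNReal.ofReal ρ * v ≤ volume (ball (0:E) (1 + ρ) \ closedBall (0:E) 1) := by
    rw [measure_diff (closedBall_subset_ball (by linarith)) measurableSet_closedBall.nullMeasurableSet
      measure_closedBall_lt_top.ne]
    rw [Measure.addHaar_ball volume _ (by linarith : (0:ℝ) ≤ 1 + ρ),
      Measure.addHaar_closedBall volume _ (by norm_num : (0:ℝ) ≤ 1),
      finrank_euclideanSpace_fin, ← hv]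
    rw [← ENNReal.sub_mul (fun _ _ => hvt)]
    apply mul_le_mul_left
    rw [← ENNReal.ofReal_sub _ (by positivity)]
    apply ENNReal.ofReal_le_ofReal
    have h1 : (1:ℝ) + 1 * ρ ≤ (1 + ρ) ^ d := by
      have := one_add_mul_le_pow (a := ρ) (by linarith) d
      have hd1 : (1:ℝ) ≤ d := by exact_mod_cast (by omega : 1 ≤ d)
      calc (1:ℝ) + 1 * ρ ≤ 1 + d * ρ := by nlinarith
        _ ≤ (1 + ρ) ^ d := this
    norm_num at h1 ⊢
    linarith
  have hvol2 : volume (ball (0:E) (1 + ρ) \ closedBall (0:E) 1)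
      ≤ (S.card : ℝ≥0∞) * (ENNReal.ofReal ((3 * ρ) ^ d) * v) := by
    calc volume (ball (0:E) (1 + ρ) \ closedBall (0:E) 1)
        ≤ volume (⋃ p ∈ S, ball p (3 * ρ)) := measure_mono hann
      _ ≤ ∑ p ∈ S, volume (ball p (3 * ρ)) := measure_biUnion_finset_le _ _
      _ = (S.card : ℝ≥0∞) * (ENNReal.ofReal ((3 * ρ) ^ d) * v) := by
          have hb : ∀ p : E, volume (ball p (3 * ρ)) = ENNReal.ofReal ((3 * ρ) ^ d) * v :=
            fun p => by
              rw [Measure.addHaar_ball volume p (by positivity : (0:ℝ) ≤ 3 * ρ),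
                finrank_euclideanSpace_fin]
          rw [Finset.sum_congr rfl fun p _ => hb p, Finset.sum_const, nsmul_eq_mul]
  have hfin := hvol1.trans hvol2
  rw [← mul_assoc] at hfin
  have := (ENNReal.mul_le_mul_iff_left hv0 hvt).mp hfin
  have h2 : ENNReal.ofReal ρ ≤ ENNReal.ofReal ((S.card : ℝ) * (3 * ρ) ^ d) := by
    rwa [ENNReal.ofReal_mul (by positivity), ENNReal.ofReal_natCast]
  have h3 := (ENNReal.ofReal_le_ofReal_iff (by positivity)).mp h2
  calc ρ ≤ (S.card : ℝ) * (3 * ρ) ^ d := h3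
    _ = (S.card : ℝ) * (3 ^ d * ρ ^ d) := by rw [mul_pow]

/-- small-cap bound: `σ(ball q ρ) ≤ 3^d ρ^{d-1}` for `q` on the sphere -/
lemma smallball (hd : 2 ≤ d) (σ : Measure E) [IsProbabilityMeasure σ]
    (hσinv : ∀ R : E ≃ₗᵢ[ℝ] E, σ.map R = σ)
    {q : E} (hq : ‖q‖ = 1) {ρ : ℝ} (hρ : 0 < ρ) (hρ1 : ρ ≤ 1) :
    σ (ball q ρ) ≤ ENNReal.ofReal (3 ^ d * ρ ^ d / ρ) := by
  obtain ⟨S, hS1, hS2, hS3⟩ := exists_packing hd hρ hρ1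
  have hcard : 0 < S.card := by
    by_contra h
    push_neg at h
    interval_cases h' : S.card <;> simp_all <;> nlinarith
  have hdisj : (S : Set E).PairwiseDisjoint (fun p => ball p ρ) := by
    intro p hp q' hq' hpq
    exact ball_disjoint_ball (by have := hS2 p hp q' hq' hpq; linarith)
  have hsum : (S.card : ℝ≥0∞) * σ (ball q ρ) ≤ 1 := by
    calc (S.card : ℝ≥0∞) * σ (ball q ρ)
        = ∑ p ∈ S, σ (ball p ρ) := by
          rw [Finset.sum_congr rfl fun p hp => ball_eq_of_inv σ hσinv (by rw [hq, hS1 p hp]) ρ,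
            Finset.sum_const, nsmul_eq_mul]
      _ = σ (⋃ p ∈ S, ball p ρ) :=
          (measure_biUnion_finset hdisj fun p _ => measurableSet_ball).symm
      _ ≤ 1 := (measure_mono (Set.subset_univ _)).trans_eq measure_univ
  have h1 : σ (ball q ρ) ≤ (S.card : ℝ≥0∞)⁻¹ :=
    ENNReal.le_inv_iff_mul_le.mpr (by rwa [mul_comm] at hsum)
  refine h1.trans ?_
  have hSpos : (0:ℝ) < (S.card : ℝ) := by exact_mod_cast hcard
  have h2 : (1:ℝ) / S.card ≤ 3 ^ d * ρ ^ d / ρ := by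
    rw [div_le_div_iff₀ hSpos hρ]
    linarith
  calc (S.card : ℝ≥0∞)⁻¹ = ENNReal.ofReal (1 / S.card) := by
        rw [ENNReal.ofReal_div_of_pos hSpos, ENNReal.ofReal_one, ENNReal.ofReal_natCast,
          ENNReal.div_eq_inv_mul, mul_one]
    _ ≤ ENNReal.ofReal (3 ^ d * ρ ^ d / ρ) := ENNReal.ofReal_le_ofReal h2

/-- every singleton is `σ`-null -/
lemma singleton_null (hd : 2 ≤ d) (σ : Measure E) [IsProbabilityMeasure σ]
    (hσsupp : σ (Metric.sphere (0 : E) 1)ᶜ = 0)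
    (hσinv : ∀ R : E ≃ₗᵢ[ℝ] E, σ.map R = σ) (p : E) :
    σ {p} = 0 := by
  by_cases hp : ‖p‖ = 1
  · have key : ∀ k : ℕ, σ {p} ≤ ENNReal.ofReal (3 ^ d * (1 / (k + 1) : ℝ) ^ d / (1 / (k + 1))) := by
      intro k
      have hk : (0:ℝ) < 1 / (k + 1) := by positivity
      have hk1 : (1 / (k + 1) : ℝ) ≤ 1 := by
        rw [div_le_one (by positivity)]
        exact le_add_of_nonneg_left (Nat.cast_nonneg k)
      have hsub : ({p} : Set E) ⊆ ball p (1 / (k + 1)) := by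
        intro x hx
        rw [Set.mem_singleton_iff] at hx
        rw [hx]
        exact mem_ball_self hk
      exact (measure_mono hsub).trans (smallball hd σ hσinv hp hk hk1)
    have htend : Filter.Tendsto
        (fun k : ℕ => ENNReal.ofReal (3 ^ d * (1 / (k + 1) : ℝ) ^ d / (1 / (k + 1))))
        Filter.atTop (nhds 0) := by
      have hre : Filter.Tendsto (fun k : ℕ => (3:ℝ) ^ d * (1 / (k + 1) : ℝ) ^ d / (1 / (k + 1)))
          Filter.atTop (nhds 0) := by
        have heq : ∀ k : ℕ, (3:ℝ) ^ d * (1 / (k + 1) : ℝ) ^ d / (1 / (k + 1))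
            = 3 ^ d * (1 / (k + 1) : ℝ) ^ (d - 1) := by
          intro k
          have hk : (0:ℝ) < 1 / (k + 1) := by positivity
          have : (1 / (k + 1) : ℝ) ^ d = (1 / (k + 1) : ℝ) ^ (d - 1) * (1 / (k + 1)) := by
            rw [← pow_succ]
            congr 1
            omega
          rw [this, ← mul_assoc, mul_div_assoc, div_self hk.ne', mul_one]
        rw [funext heq]
        have h0 : Filter.Tendsto (fun k : ℕ => (1 / (k + 1) : ℝ)) Filter.atTop (nhds 0) :=
          tendsto_one_div_add_atTop_nhds_zero_nat
        have := (h0.pow (d - 1)).const_mul ((3:ℝ) ^ d)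
        simpa [zero_pow (by omega : d - 1 ≠ 0)] using this
      have := ENNReal.tendsto_ofReal hre
      simpa using this
    exact le_antisymm (ge_of_tendsto' htend key) zero_le
  · refine measure_mono_null ?_ hσsupp
    simp only [Set.singleton_subset_iff, Set.mem_compl_iff, mem_sphere, dist_zero_right]
    simpa [dist_eq_norm] using hp

/-- finiteness of the Riesz potential -/
lemma lint_fin (hd : 2 ≤ d) {s : ℝ} (hs₁ : 0 < s) (hs₂ : s < (d:ℝ) - 1)
    (σ : Measure E) [IsProbabilityMeasure σ]
    (hσinv : ∀ R : E ≃ₗᵢ[ℝ] E, σ.map R = σ)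
    {q : E} (hq : ‖q‖ = 1) :
    ∫⁻ x, ENNReal.ofReal (‖x - q‖ ^ (-s)) ∂σ < ⊤ := by
  classical
  -- dominating function
  set g : E → ℝ≥0∞ := fun x => 1 + ∑' k : ℕ,
    (ball q ((1/2 : ℝ) ^ k)).indicator
      (fun _ => ENNReal.ofReal ((2:ℝ) ^ (((k:ℝ) + 1) * s))) x with hg
  have hpt : ∀ x : E, ENNReal.ofReal (‖x - q‖ ^ (-s)) ≤ g x := by
    intro x
    set t : ℝ := ‖x - q‖ with ht
    have ht0 : 0 ≤ t := norm_nonneg _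
    rcases eq_or_lt_of_le ht0 with h0 | h0
    · -- t = 0
      rw [← h0, Real.zero_rpow (by linarith : -s ≠ 0)]
      simp [hg]
    rcases le_or_gt 1 t with h1 | h1
    · -- t ≥ 1 : integrand ≤ 1
      have : t ^ (-s) ≤ 1 := Real.rpow_le_one_of_one_le_of_nonpos h1 (by linarith)
      calc ENNReal.ofReal (t ^ (-s)) ≤ 1 := by
            rw [← ENNReal.ofReal_one]; exact ENNReal.ofReal_le_ofReal this
        _ ≤ g x := by rw [hg]; exact le_add_of_nonneg_right zero_le
    · -- 0 < t < 1 : find the dyadic scale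
      have hex : ∃ n : ℕ, (1/2 : ℝ) ^ (n + 1) ≤ t := by
        obtain ⟨n, hn⟩ := exists_pow_lt_of_lt_one h0 (by norm_num : (1/2 : ℝ) < 1)
        exact ⟨n, by
          calc (1/2:ℝ) ^ (n+1) ≤ (1/2) ^ n * 1 := by
                rw [pow_succ]; gcongr; norm_num
            _ ≤ t := by rw [mul_one]; exact hn.le⟩
      set k := Nat.find hex with hk
      have hk1 : (1/2 : ℝ) ^ (k + 1) ≤ t := Nat.find_spec hex
      have hk2 : t < (1/2 : ℝ) ^ k := by
        rcases Nat.eq_zero_or_pos k with h | h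
        · rw [h, pow_zero]; exact h1
        · have := Nat.find_min hex (m := k - 1) (by omega)
          push_neg at this
          calc t < (1/2 : ℝ) ^ (k - 1 + 1) := this
            _ = (1/2 : ℝ) ^ k := by congr 1; omega
      have hmem : x ∈ ball q ((1/2 : ℝ) ^ k) := by
        rw [mem_ball, dist_eq_norm]; exact hk2
      have hbound : t ^ (-s) ≤ (2:ℝ) ^ (((k:ℝ) + 1) * s) := by
        have h2 : ((1/2 : ℝ) ^ (k + 1)) ^ (-s) = (2:ℝ) ^ (((k:ℝ) + 1) * s) := by
          rw [← Real.rpow_natCast ((1/2:ℝ)) (k+1), ← Real.rpow_mul (by norm_num)]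
          rw [show (1/2 : ℝ) = 2⁻¹ by norm_num, Real.inv_rpow (by norm_num)]
          rw [← Real.rpow_neg (by norm_num)]
          congr 1
          push_cast
          ring
        rw [← h2]
        exact Real.rpow_le_rpow_of_nonpos (by positivity) hk1 (by linarith)
      calc ENNReal.ofReal (t ^ (-s)) ≤ ENNReal.ofReal ((2:ℝ) ^ (((k:ℝ) + 1) * s)) :=
            ENNReal.ofReal_le_ofReal hbound
        _ = (ball q ((1/2 : ℝ) ^ k)).indicator
              (fun _ => ENNReal.ofReal ((2:ℝ) ^ (((k:ℝ) + 1) * s))) x := by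
            rw [Set.indicator_of_mem hmem]
        _ ≤ ∑' k' : ℕ, (ball q ((1/2 : ℝ) ^ k')).indicator
              (fun _ => ENNReal.ofReal ((2:ℝ) ^ (((k':ℝ) + 1) * s))) x := ENNReal.le_tsum k
        _ ≤ g x := by rw [hg]; exact le_add_of_nonneg_left zero_le
  have hgint : ∫⁻ x, g x ∂σ < ⊤ := by
    rw [hg]
    rw [lintegral_add_left measurable_const]
    simp only [lintegral_const, measure_univ, mul_one, one_mul]
    rw [lintegral_tsum (fun k => ((measurable_const).indicator measurableSet_ball).aemeasurable)]
    have hterm : ∀ k : ℕ,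
        ∫⁻ x, (ball q ((1/2 : ℝ) ^ k)).indicator
          (fun _ => ENNReal.ofReal ((2:ℝ) ^ (((k:ℝ) + 1) * s))) x ∂σ
        ≤ ENNReal.ofReal ((2:ℝ) ^ s * 3 ^ d) *
            (ENNReal.ofReal ((2:ℝ) ^ (s - ((d:ℝ) - 1)))) ^ k := by
      intro k
      rw [lintegral_indicator measurableSet_ball, setLIntegral_const]
      have hρ : (0:ℝ) < (1/2 : ℝ) ^ k := by positivity
      have hρ1 : ((1/2 : ℝ) ^ k : ℝ) ≤ 1 := pow_le_one₀ (by norm_num) (by norm_num)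
      calc ENNReal.ofReal ((2:ℝ) ^ (((k:ℝ) + 1) * s)) * σ (ball q ((1/2 : ℝ) ^ k))
          ≤ ENNReal.ofReal ((2:ℝ) ^ (((k:ℝ) + 1) * s)) *
              ENNReal.ofReal (3 ^ d * ((1/2:ℝ) ^ k) ^ d / ((1/2:ℝ) ^ k)) := by
            gcongr
            exact smallball hd σ hσinv hq hρ hρ1
        _ = ENNReal.ofReal ((2:ℝ) ^ (((k:ℝ) + 1) * s) *
              (3 ^ d * ((1/2:ℝ) ^ k) ^ d / ((1/2:ℝ) ^ k))) := by
            rw [← ENNReal.ofReal_mul (by positivity)]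
        _ = ENNReal.ofReal ((2:ℝ) ^ s * 3 ^ d) *
              (ENNReal.ofReal ((2:ℝ) ^ (s - ((d:ℝ) - 1)))) ^ k := by
            rw [← ENNReal.ofReal_pow (by positivity), ← ENNReal.ofReal_mul (by positivity)]
            congr 1
            -- real computation
            rw [← Real.rpow_natCast ((2:ℝ) ^ (s - ((d:ℝ) - 1))) k,
              ← Real.rpow_mul (by norm_num)]
            have hhalf : ((1/2:ℝ) ^ k) = (2:ℝ) ^ (-(k:ℝ)) := by
              rw [show (1/2 : ℝ) = 2⁻¹ by norm_num, ← Real.rpow_natCast (2⁻¹:ℝ) k,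
                Real.inv_rpow (by norm_num), ← Real.rpow_neg (by norm_num)]
            have hd' : (((1/2:ℝ) ^ k) ^ d : ℝ) = (2:ℝ) ^ (-(k:ℝ) * d) := by
              rw [hhalf, ← Real.rpow_natCast ((2:ℝ) ^ (-(k:ℝ))) d,
                ← Real.rpow_mul (by norm_num)]
            rw [hd', hhalf, div_eq_mul_inv, ← Real.rpow_neg (by norm_num : (0:ℝ) ≤ 2),
              neg_neg]
            have e2 : (2:ℝ) ^ (((k:ℝ)+1)*s) * 2 ^ (-(k:ℝ)*(d:ℝ)) * 2 ^ (k:ℝ)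
                = 2 ^ s * 2 ^ ((s - ((d:ℝ)-1)) * (k:ℝ)) := by
              rw [← Real.rpow_add (by norm_num : (0:ℝ) < 2),
                ← Real.rpow_add (by norm_num : (0:ℝ) < 2),
                ← Real.rpow_add (by norm_num : (0:ℝ) < 2)]
              congr 1
              ring
            calc (2:ℝ) ^ (((k:ℝ)+1)*s) * (3 ^ d * 2 ^ (-(k:ℝ)*(d:ℝ)) * 2 ^ (k:ℝ))
                = ((2:ℝ) ^ (((k:ℝ)+1)*s) * 2 ^ (-(k:ℝ)*(d:ℝ)) * 2 ^ (k:ℝ)) * 3 ^ d := by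
                  ring
              _ = (2 ^ s * 2 ^ ((s - ((d:ℝ)-1)) * (k:ℝ))) * 3 ^ d := by rw [e2]
              _ = 2 ^ s * 3 ^ d * 2 ^ ((s - ((d:ℝ)-1)) * (k:ℝ)) := by ring
    refine ENNReal.add_lt_top.mpr ⟨ENNReal.one_lt_top, ?_⟩
    calc (∑' k : ℕ, ∫⁻ x, (ball q ((1/2 : ℝ) ^ k)).indicator
            (fun _ => ENNReal.ofReal ((2:ℝ) ^ (((k:ℝ) + 1) * s))) x ∂σ)
        ≤ (∑' k : ℕ, ENNReal.ofReal ((2:ℝ) ^ s * 3 ^ d) *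
            (ENNReal.ofReal ((2:ℝ) ^ (s - ((d:ℝ) - 1)))) ^ k) := by
          exact ENNReal.tsum_le_tsum hterm
      _ = ENNReal.ofReal ((2:ℝ) ^ s * 3 ^ d) *
            (∑' k : ℕ, (ENNReal.ofReal ((2:ℝ) ^ (s - ((d:ℝ) - 1)))) ^ k) := by
          rw [ENNReal.tsum_mul_left]
      _ < ⊤ := by
          have hr : ENNReal.ofReal ((2:ℝ) ^ (s - ((d:ℝ) - 1))) < 1 := by
            rw [← ENNReal.ofReal_one]
            apply ENNReal.ofReal_lt_ofReal_iff_of_nonneg (by positivity) |>.mpr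
            calc (2:ℝ) ^ (s - ((d:ℝ) - 1)) < 2 ^ (0:ℝ) :=
                  Real.rpow_lt_rpow_left_iff (by norm_num) |>.mpr (by linarith)
              _ = 1 := Real.rpow_zero 2
          have := ENNReal.tsum_geometric (ENNReal.ofReal ((2:ℝ) ^ (s - ((d:ℝ) - 1))))
          rw [this]
          apply ENNReal.mul_lt_top ENNReal.ofReal_lt_top
          rw [ENNReal.inv_lt_top]
          exact tsub_pos_of_lt hr
  calc ∫⁻ x, ENNReal.ofReal (‖x - q‖ ^ (-s)) ∂σ ≤ ∫⁻ x, g x ∂σ := lintegral_mono hpt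
    _ < ⊤ := hgint

lemma riesz_meas (s : ℝ) (q : E) :
    Measurable (fun x : E => ‖x - q‖ ^ (-s)) :=
  (measurable_id.sub_const q).norm.pow_const (-s)

lemma riesz_int (hd : 2 ≤ d) {s : ℝ} (hs₁ : 0 < s) (hs₂ : s < (d:ℝ) - 1)
    (σ : Measure E) [IsProbabilityMeasure σ]
    (hσinv : ∀ R : E ≃ₗᵢ[ℝ] E, σ.map R = σ)
    {q : E} (hq : ‖q‖ = 1) :
    Integrable (fun x : E => ‖x - q‖ ^ (-s)) σ := by
  refine ⟨(riesz_meas s q).aestronglyMeasurable, ?_⟩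
  rw [hasFiniteIntegral_iff_ofReal (Filter.Eventually.of_forall fun x =>
    Real.rpow_nonneg (norm_nonneg _) _)]
  exact lint_fin hd hs₁ hs₂ σ hσinv hq

/-- the potential integral is the same for all points on the sphere -/
lemma riesz_const (σ : Measure E)
    (hσinv : ∀ R : E ≃ₗᵢ[ℝ] E, σ.map R = σ) (s : ℝ)
    {q q' : E} (h : ‖q‖ = ‖q'‖) :
    ∫ x, ‖x - q‖ ^ (-s) ∂σ = ∫ x, ‖x - q'‖ ^ (-s) ∂σ := by
  obtain ⟨R, hR⟩ := exists_isometry q q' h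
  conv_rhs => rw [← hσinv R]
  rw [integral_map R.continuous.measurable.aemeasurable
    (riesz_meas s q').aestronglyMeasurable]
  congr 1
  ext x
  rw [← hR, ← R.map_sub, R.norm_map]

lemma energy_update (n : ℕ) (s : ℝ) (w : Fin n → E) (i : Fin n) (x : E) :
    rieszEnergy d n s (Function.update w i x)
      + 2 * ∑ j ∈ Finset.univ.erase i, ‖w i - w j‖ ^ (-s)
    = rieszEnergy d n s w + 2 * ∑ j ∈ Finset.univ.erase i, ‖x - w j‖ ^ (-s) := by
  classical
  set k : E → E → ℝ := fun u v => ‖u - v‖ ^ (-s) with hk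
  have ksymm : ∀ u v, k u v = k v u := fun u v => by rw [hk]; simp [norm_sub_rev]
  set w' := Function.update w i x with hw'
  have hw'i : w' i = x := Function.update_self i x w
  have hw'j : ∀ j, j ≠ i → w' j = w j := fun j hj => Function.update_of_ne hj x w
  have key : ∀ v : Fin n → E,
      rieszEnergy d n s v = (∑ b ∈ Finset.univ.erase i, k (v i) (v b))
        + ∑ a ∈ Finset.univ.erase i,
            (k (v a) (v i) + ∑ b ∈ (Finset.univ.erase a).erase i, k (v a) (v b)) := by
    intro v
    rw [rieszEnergy, ← Finset.add_sum_erase _ _ (Finset.mem_univ i)]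
    congr 1
    refine Finset.sum_congr rfl fun a ha => ?_
    have hai : i ∈ Finset.univ.erase a :=
      Finset.mem_erase.mpr ⟨(Finset.mem_erase.mp ha).1.symm, Finset.mem_univ i⟩
    rw [← Finset.add_sum_erase _ _ hai]
  have hrest : ∀ a ∈ Finset.univ.erase i,
      ∑ b ∈ (Finset.univ.erase a).erase i, k (w' a) (w' b)
      = ∑ b ∈ (Finset.univ.erase a).erase i, k (w a) (w b) := by
    intro a ha
    have hai : a ≠ i := (Finset.mem_erase.mp ha).1
    refine Finset.sum_congr rfl fun b hb => ?_
    have hbi : b ≠ i := (Finset.mem_erase.mp hb).1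
    rw [hw'j a hai, hw'j b hbi]
  have h1 : (∑ b ∈ Finset.univ.erase i, k (w' i) (w' b))
      = ∑ b ∈ Finset.univ.erase i, k x (w b) := by
    refine Finset.sum_congr rfl fun b hb => ?_
    rw [hw'i, hw'j b (Finset.mem_erase.mp hb).1]
  have h2 : (∑ a ∈ Finset.univ.erase i, k (w' a) (w' i))
      = ∑ a ∈ Finset.univ.erase i, k x (w a) := by
    refine Finset.sum_congr rfl fun a ha => ?_
    rw [hw'i, hw'j a (Finset.mem_erase.mp ha).1, ksymm]
  have h3 : (∑ a ∈ Finset.univ.erase i, k (w a) (w i))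
      = ∑ a ∈ Finset.univ.erase i, k (w i) (w a) := by
    exact Finset.sum_congr rfl fun a _ => ksymm _ _
  rw [key w', key w, Finset.sum_add_distrib, Finset.sum_add_distrib,
    Finset.sum_congr rfl hrest, h1, h3]
  have h2' : (∑ a ∈ Finset.univ.erase i, k (w' a) (w' i)) = ∑ a ∈ Finset.univ.erase i, k x (w a) := h2
  rw [h2']
  ring

lemma update_config (n : ℕ) (w : Fin n → E) (hw : IsSphereConfig d n w)
    (i : Fin n) (x : E) (hx : ‖x‖ = 1) (hxw : x ∉ Set.range w) :
    IsSphereConfig d n (Function.update w i x) := by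
  constructor
  · intro j
    by_cases hj : j = i
    · rw [hj, Function.update_self]; exact hx
    · rw [Function.update_of_ne hj]; exact hw.1 j
  · intro a b hab
    by_cases ha : a = i <;> by_cases hb : b = i
    · rw [ha, hb]
    · rw [ha, Function.update_self, Function.update_of_ne hb] at hab
      exact absurd ⟨b, hab.symm⟩ hxw
    · rw [hb, Function.update_self, Function.update_of_ne ha] at hab
      exact absurd ⟨a, hab⟩ hxw
    · rw [Function.update_of_ne ha, Function.update_of_ne hb] at hab
      exact hw.2 hab

end Stmt14Aux

open Metric Finset Filter Stmt14Aux
open scoped ENNReal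

theorem stmt_14 (d : ℕ) (hd : 2 ≤ d) (s : ℝ) (hs₁ : 0 < s) (hs₂ : s < (d : ℝ) - 1)
    -- σ is the uniform (rotation-invariant) Borel probability measure on `S^{d-1}`
    (σ : Measure (EuclideanSpace ℝ (Fin d))) (hσp : IsProbabilityMeasure σ)
    (hσsupp : σ (Metric.sphere (0 : EuclideanSpace ℝ (Fin d)) 1)ᶜ = 0)
    (hσinv : ∀ R : EuclideanSpace ℝ (Fin d) ≃ₗᵢ[ℝ] EuclideanSpace ℝ (Fin d),
      σ.map R = σ)
    (n : ℕ) (hn : 2 ≤ n)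
    (w : Fin n → EuclideanSpace ℝ (Fin d)) (hw : IsSphereConfig d n w)
    -- `w` attains the minimal Riesz `s`-energy `ε_s(S^{d-1}, n)`
    (hmin : ∀ w' : Fin n → EuclideanSpace ℝ (Fin d), IsSphereConfig d n w' →
      rieszEnergy d n s w ≤ rieszEnergy d n s w') :
    ∀ i : Fin n,
      (1 / ((n : ℝ) - 1)) * ∑ j ∈ Finset.univ.erase i, ‖w i - w j‖ ^ (-s) ≤
        ∫ x, (∫ y, ‖x - y‖ ^ (-s) ∂σ) ∂σ := by
  haveI := hσp
  intro i
  set U : ℝ := ∑ j ∈ Finset.univ.erase i, ‖w i - w j‖ ^ (-s) with hU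
  set e : EuclideanSpace ℝ (Fin d) := EuclideanSpace.single (⟨0, by omega⟩ : Fin d) (1:ℝ) with he
  have hene : ‖e‖ = 1 := by simp [he]
  set c : ℝ := ∫ x, ‖x - e‖ ^ (-s) ∂σ with hc
  -- pointwise bound from minimality
  have hpt : ∀ x : EuclideanSpace ℝ (Fin d), ‖x‖ = 1 → x ∉ Set.range w →
      U ≤ ∑ j ∈ Finset.univ.erase i, ‖x - w j‖ ^ (-s) := by
    intro x hx hxw
    have h1 := hmin _ (update_config n w hw i x hx hxw)
    have h2 := energy_update n s w i x
    rw [hU]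
    linarith
  -- a.e. bound
  have hae : ∀ᵐ x ∂σ, U ≤ ∑ j ∈ Finset.univ.erase i, ‖x - w j‖ ^ (-s) := by
    have hnull : σ ((Metric.sphere (0:EuclideanSpace ℝ (Fin d)) 1)ᶜ ∪ ⋃ j : Fin n, {w j}) = 0 :=
      measure_union_null hσsupp
        (measure_iUnion_null fun j => singleton_null hd σ hσsupp hσinv (w j))
    filter_upwards [measure_eq_zero_iff_ae_notMem.mp hnull] with x hx
    rw [Set.mem_union, not_or] at hx
    obtain ⟨hx1, hx2⟩ := hx
    have hxs : ‖x‖ = 1 := by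
      rw [Set.notMem_compl_iff] at hx1
      simpa [dist_eq_norm] using hx1
    have hxr : x ∉ Set.range w := by
      intro ⟨j, hj⟩
      exact hx2 (Set.mem_iUnion.mpr ⟨j, by rw [← hj]; rfl⟩)
    exact hpt x hxs hxr
  have hInt : ∀ j : Fin n, Integrable (fun x : EuclideanSpace ℝ (Fin d) => ‖x - w j‖ ^ (-s)) σ :=
    fun j => riesz_int hd hs₁ hs₂ σ hσinv (hw.1 j)
  have hsumInt : Integrable (fun x : EuclideanSpace ℝ (Fin d) => ∑ j ∈ Finset.univ.erase i,
      ‖x - w j‖ ^ (-s)) σ :=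
    integrable_finset_sum _ fun j _ => hInt j
  have hcardn : ((Finset.univ.erase i).card : ℝ) = (n : ℝ) - 1 := by
    rw [Finset.card_erase_of_mem (Finset.mem_univ i), Finset.card_univ, Fintype.card_fin]
    push_cast [Nat.cast_sub (by omega : 1 ≤ n)]
    ring
  have hUc : U ≤ ((n : ℝ) - 1) * c := by
    calc U = ∫ _x, U ∂σ := by rw [integral_const]; simp
      _ ≤ ∫ x, ∑ j ∈ Finset.univ.erase i, ‖x - w j‖ ^ (-s) ∂σ :=
          integral_mono_ae (integrable_const U) hsumInt hae
      _ = ∑ j ∈ Finset.univ.erase i, ∫ x, ‖x - w j‖ ^ (-s) ∂σ :=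
          integral_finset_sum _ fun j _ => hInt j
      _ = ∑ _j ∈ Finset.univ.erase i, c :=
          Finset.sum_congr rfl fun j _ => riesz_const σ hσinv s (by rw [hw.1 j, hene])
      _ = ((n : ℝ) - 1) * c := by rw [Finset.sum_const, nsmul_eq_mul, hcardn]
  have hRHS : ∫ x, (∫ y, ‖x - y‖ ^ (-s) ∂σ) ∂σ = c := by
    have hae2 : ∀ᵐ x ∂σ, (∫ y, ‖x - y‖ ^ (-s) ∂σ) = c := by
      filter_upwards [measure_eq_zero_iff_ae_notMem.mp hσsupp] with x hx
      have hx1 : ‖x‖ = 1 := by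
        rw [Set.notMem_compl_iff] at hx
        simpa [dist_eq_norm] using hx
      have hsymm : ∫ y, ‖x - y‖ ^ (-s) ∂σ = ∫ y, ‖y - x‖ ^ (-s) ∂σ := by
        congr 1
        funext y
        rw [norm_sub_rev]
      rw [hsymm, hc]
      exact riesz_const σ hσinv s (by rw [hx1, hene])
    rw [integral_congr_ae hae2, integral_const]
    simp
  rw [hRHS]
  have hn1 : (0:ℝ) < (n:ℝ) - 1 := by
    have : (2:ℝ) ≤ n := by exact_mod_cast hn
    linarith
  rw [one_div, inv_mul_le_iff₀ hn1]
  exact hUc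
end
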